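/- Suppose the sequence d̂ : ℤ² → ℂ is annihilated by some trigonometric polynomial with coefficients supported in a finite set Λ₀, and let Λ ⊇ Λ₀ + Γ for a finite set Γ with |Γ| ≥ 2. Then the block-Toeplitz matrix T built from d̂ with filter support Λ has nullspace of dimension at least |Γ|. -/

import Mathlib

/-!
Filters are elements of the group algebra `ℂ[ℤ²]`, and filtering a sequence is compatible with
multiplication: `(a * μ) ∗ d = a ∗ (μ ∗ d)`. Hence every multiple `a * μ₀` with `a` supported on
`Γ` annihilates `d`, and it is supported on `Γ + Λ₀ ⊆ Λ`. Since `ℂ[ℤ²]` has no zero divisors,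
`a ↦ a * μ₀` is injective, so these multiples span a space of dimension `|Γ|` inside the
nullspace.
-/

open Pointwise AddMonoidAlgebra

section Convolution

variable {R G : Type*} [Semiring R] [AddCommGroup G]

noncomputable def convolve (c : R[G]) (d : G → R) (m : G) : R :=
  c.coeff.sum fun k a => a * d (m - k)

lemma convolve_eq_sum_of_support_subset {c : R[G]} {s : Finset G} (hc : c.coeff.support ⊆ s)
    (d : G → R) (m : G) : convolve c d m = ∑ k ∈ s, c.coeff k * d (m - k) :=
  Finsupp.sum_of_support_subset _ hc _ fun _ _ => zero_mul _

lemma convolve_mul (a b : R[G]) (d : G → R) (m : G) :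
    convolve (a * b) d m = a.coeff.sum fun γ x => x * convolve b d (m - γ) := by
  simp only [convolve, mul_def, coeff_finsuppSum, coeff_single]
  rw [Finsupp.sum_sum_index (fun _ => zero_mul _) fun _ _ _ => add_mul _ _ _]
  refine Finsupp.sum_congr fun γ _ => ?_
  rw [Finsupp.sum_sum_index (fun _ => zero_mul _) fun _ _ _ => add_mul _ _ _, Finsupp.mul_sum]
  refine Finsupp.sum_congr fun k _ => ?_
  rw [Finsupp.sum_single_index (zero_mul _), mul_assoc, sub_sub]

lemma convolve_mul_eq_zero (a : R[G]) {b : R[G]} {d : G → R} (hb : ∀ m, convolve b d m = 0)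
    (m : G) : convolve (a * b) d m = 0 := by
  simp [convolve_mul, hb]

end Convolution

section Restriction

variable {R G : Type*} [CommRing R] [AddCommGroup G] (μ : R[G]) (Γ Λ : Finset G)

/-- `a ↦ (a * μ)|_Λ`, whose values are the combinations `∑ γ, a[γ] • μ[· - γ]` of shifts of `μ`. -/
noncomputable def restrictMulRight : supported R R (Γ : Set G) →ₗ[R] Λ → R :=
  LinearMap.funLeft R R ((↑) : Λ → G) ∘ₗ Finsupp.lcoeFun ∘ₗ (coeffLinearEquiv R).toLinearMap ∘ₗ
    LinearMap.mulRight R μ ∘ₗ (supported R R (Γ : Set G)).subtype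

variable {μ Γ Λ} [DecidableEq G]

lemma support_coeff_mul_subset_of_mem_supported (hΛ : Γ + μ.coeff.support ⊆ Λ)
    {a : R[G]} (ha : a ∈ supported R R (Γ : Set G)) : (a * μ).coeff.support ⊆ Λ := by
  grw [support_coeff_mul_subset, Finset.coe_subset.1 (mem_supported.1 ha)]
  exact hΛ

lemma restrictMulRight_injective [NoZeroDivisors R[G]] (hμ : μ ≠ 0)
    (hΛ : Γ + μ.coeff.support ⊆ Λ) : Function.Injective (restrictMulRight μ Γ Λ) := by
  refine (injective_iff_map_eq_zero _).2 fun a ha => ?_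
  have hmul : (a : R[G]) * μ = 0 := by
    refine coeff_inj.1 (Finsupp.ext fun k => ?_)
    by_contra hk
    have hkΛ : k ∈ Λ :=
      support_coeff_mul_subset_of_mem_supported hΛ a.2 (Finsupp.mem_support_iff.2 hk)
    exact hk (congrFun ha ⟨k, hkΛ⟩)
  exact Subtype.ext ((mul_eq_zero.1 hmul).resolve_right hμ)

lemma finrank_range_restrictMulRight [NoZeroDivisors R[G]] [StrongRankCondition R] (hμ : μ ≠ 0)
    (hΛ : Γ + μ.coeff.support ⊆ Λ) :
    Module.finrank R (LinearMap.range (restrictMulRight μ Γ Λ)) = Γ.card := by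
  rw [LinearMap.finrank_range_of_inj (restrictMulRight_injective hμ hΛ),
    (supportedEquivFinsupp (Γ : Set G)).finrank_eq, Module.finrank_finsupp_self]
  simp

lemma sum_restrictMulRight_mul_eq_zero {d : G → R} (hμd : ∀ m, convolve μ d m = 0)
    (hΛ : Γ + μ.coeff.support ⊆ Λ) (a : supported R R (Γ : Set G)) (m : G) :
    ∑ k : Λ, restrictMulRight μ Γ Λ a k * d (m - k) = 0 := by
  rw [← convolve_mul_eq_zero (a : R[G]) hμd m,
    convolve_eq_sum_of_support_subset (support_coeff_mul_subset_of_mem_supported hΛ a.2)]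
  exact Finset.sum_coe_sort Λ fun k => ((a : R[G]) * μ).coeff k * d (m - k)

end Restriction

theorem nullspace_dim_ge_of_shifted_filters_general
    (d : ℤ × ℤ → ℂ) (Λ₀ Γ Λ : Finset (ℤ × ℤ))
    (hΛ : Λ₀ + Γ ⊆ Λ)
    (μ₀ : ℤ × ℤ → ℂ)
    (hne : ∃ k ∈ Λ₀, μ₀ k ≠ 0)
    (hann : ∀ m : ℤ × ℤ, ∑ k ∈ Λ₀, μ₀ k * d (m - k) = 0) :
    ∃ W : Submodule ℂ (Λ → ℂ),
      (∀ c ∈ W, ∀ m : ℤ × ℤ, ∑ k : Λ, c k * d (m - (k : ℤ × ℤ)) = 0) ∧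
      Γ.card ≤ Module.finrank ℂ W := by
  set μ : ℂ[ℤ × ℤ] := ofCoeff (Finsupp.indicator Λ₀ fun k _ => μ₀ k)
  have hμ_coeff : ∀ k ∈ Λ₀, μ.coeff k = μ₀ k := fun k hk =>
    Finsupp.indicator_of_mem hk fun k _ => μ₀ k
  have hμ_supp : μ.coeff.support ⊆ Λ₀ := Finsupp.support_indicator_subset _ _
  have hμd : ∀ m, convolve μ d m = 0 := fun m => by
    rw [convolve_eq_sum_of_support_subset hμ_supp, ← hann m]
    exact Finset.sum_congr rfl fun k hk => by rw [hμ_coeff k hk]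
  have hμ : μ ≠ 0 := by
    obtain ⟨k, hk, hμk⟩ := hne
    exact fun h => hμk (by rw [← hμ_coeff k hk, h, coeff_zero, Finsupp.zero_apply])
  have hΛ' : Γ + μ.coeff.support ⊆ Λ := by
    grw [hμ_supp, add_comm]
    exact hΛ
  refine ⟨LinearMap.range (restrictMulRight μ Γ Λ), ?_, (finrank_range_restrictMulRight hμ hΛ').ge⟩
  rintro _ ⟨a, rfl⟩ m
  exact sum_restrictMulRight_mul_eq_zero hμd hΛ' a m

/-- suppose the sequence `d : ℤ² → ℂ` is annihilated by a nonzero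
filter `μ₀` supported in a finite set `Λ₀`, and `Λ ⊇ Λ₀ + Γ` for a finite set
`Γ` with `|Γ| ≥ 2`.  Then the nullspace of the block-Toeplitz operator built
from `d` with filter support `Λ` (the space of filters `c` on `Λ` with
`(c ∗ d)[m] = 0` for all `m ∈ ℤ²`) has dimension at least `|Γ|`. -/
theorem nullspace_dim_ge_of_shifted_filters
    (d : ℤ × ℤ → ℂ) (Λ₀ Γ Λ : Finset (ℤ × ℤ))
    (hΛ : Λ₀ + Γ ⊆ Λ) (hΓ : 2 ≤ Γ.card)
    (μ₀ : ℤ × ℤ → ℂ) (hsupp : ∀ k ∉ Λ₀, μ₀ k = 0)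
    (hne : ∃ k ∈ Λ₀, μ₀ k ≠ 0)
    (hann : ∀ m : ℤ × ℤ, ∑ k ∈ Λ₀, μ₀ k * d (m - k) = 0) :
    ∃ W : Submodule ℂ (Λ → ℂ),
      (∀ c ∈ W, ∀ m : ℤ × ℤ, ∑ k : Λ, c k * d (m - (k : ℤ × ℤ)) = 0) ∧
      Γ.card ≤ Module.finrank ℂ W :=
  nullspace_dim_ge_of_shifted_filters_general d Λ₀ Γ Λ hΛ μ₀ hne hann
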